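/- arXiv:2006.08871 — 3 statements merged into one kernel-verified Lean document; each statement's English description precedes it below -/
import Mathlib

section
/- For any type S, every element w of the commutator subgroup of the free group F(S) on S can be written as a finite product w = (of a₁, of b₁)^{u₁} · ⋯ · (of a_k, of b_k)^{u_k} for some k ≥ 0, elements a₁, b₁, …, a_k, b_k of S, and elements u₁, …, u_k of F(S), where (x,y) = x⁻¹y⁻¹xy, x^u = u⁻¹xu, and 'of' denotes the canonical inclusion of generators into F(S). -/
/-!
Conjugates of commutators `(x, y) = x⁻¹y⁻¹xy` of generators form a conjugation-invariant set that
is closed under inversion, because `(x, y)⁻¹ = (y, x)`. So the subgroup they generate is normal and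
consists of plain products of such conjugates. Modulo this subgroup the generators commute, hence
the quotient is abelian and the subgroup contains the commutator subgroup.
-/

open Subgroup

namespace Subgroup

variable {G : Type*} [Group G]

theorem isMulCommutative_of_closure_eq_top {s : Set G} (hs : closure s = ⊤)
    (hcomm : ∀ x ∈ s, ∀ y ∈ s, x * y = y * x) : IsMulCommutative G := by
  have hs_le : closure s ≤ centralizer s :=
    (closure_le _).mpr fun y hy => mem_centralizer_iff.mpr fun x hx => hcomm x hx y hy
  refine ⟨⟨fun x y => ?_⟩⟩
  have hx : x ∈ centralizer (centralizer s) :=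
    closure_le_centralizer_centralizer s (hs ▸ mem_top x)
  exact (mem_centralizer_iff.mp hx y (hs_le (hs ▸ mem_top y))).symm

theorem exists_list_of_mem_closure_of_inv_subset {s : Set G} (hs : s⁻¹ ⊆ s) {x : G}
    (hx : x ∈ closure s) : ∃ l : List G, (∀ y ∈ l, y ∈ s) ∧ l.prod = x := by
  rw [← mem_toSubmonoid, closure_toSubmonoid, Set.union_eq_left.mpr hs] at hx
  exact Submonoid.exists_list_of_mem_closure hx

end Subgroup

section ConjCommutators

variable {ι G : Type*} [Group G] (f : ι → G)

def conjCommutator (a b : ι) (u : G) : G :=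
  u⁻¹ * ((f a)⁻¹ * (f b)⁻¹ * f a * f b) * u

def conjCommutators : Set G :=
  {g | ∃ a b u, conjCommutator f a b u = g}

theorem conjCommutator_inv (a b : ι) (u : G) :
    (conjCommutator f a b u)⁻¹ = conjCommutator f b a u := by
  simp only [conjCommutator]
  group

theorem conj_conjCommutator (a b : ι) (u c : G) :
    c * conjCommutator f a b u * c⁻¹ = conjCommutator f a b (u * c⁻¹) := by
  simp only [conjCommutator]
  group

theorem inv_conjCommutators_subset : (conjCommutators f)⁻¹ ⊆ conjCommutators f := by
  rintro _ ⟨a, b, u, hg⟩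
  exact ⟨b, a, u, by rw [← conjCommutator_inv, hg, inv_inv]⟩

theorem conjugatesOfSet_conjCommutators :
    Group.conjugatesOfSet (conjCommutators f) = conjCommutators f := by
  refine Set.Subset.antisymm (fun g hg => ?_) Group.subset_conjugatesOfSet
  obtain ⟨_, ⟨a, b, u, rfl⟩, hconj⟩ := Group.mem_conjugatesOfSet_iff.mp hg
  obtain ⟨c, rfl⟩ := isConj_iff.mp hconj
  exact ⟨a, b, u * c⁻¹, (conj_conjCommutator f a b u c).symm⟩

theorem normalClosure_conjCommutators :
    normalClosure (conjCommutators f) = closure (conjCommutators f) := by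
  rw [normalClosure, conjugatesOfSet_conjCommutators]

instance closure_conjCommutators_normal : (closure (conjCommutators f)).Normal :=
  normalClosure_conjCommutators f ▸ normalClosure_normal

variable {f}

theorem commutator_le_closure_conjCommutators (hf : closure (Set.range f) = ⊤) :
    commutator G ≤ closure (conjCommutators f) := by
  set N := closure (conjCommutators f)
  refine Normal.quotient_commutative_iff_commutator_le.mp
    (isMulCommutative_of_closure_eq_top (s := Set.range (QuotientGroup.mk' N ∘ f)) ?_ ?_)
  · rw [Set.range_comp, ← MonoidHom.map_closure, hf, ← MonoidHom.range_eq_map,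
      MonoidHom.range_eq_top]
    exact QuotientGroup.mk'_surjective N
  · rintro _ ⟨a, rfl⟩ _ ⟨b, rfl⟩
    rw [Function.comp_apply, Function.comp_apply, ← map_mul, ← map_mul, QuotientGroup.mk'_apply,
      QuotientGroup.mk'_apply, QuotientGroup.eq]
    exact subset_closure ⟨b, a, 1, by simp only [conjCommutator]; group⟩

end ConjCommutators

/-- Every element of the commutator subgroup of a free group is a finite product of
conjugates of commutators of generators:
`w = (of a₁, of b₁)^{u₁} ⋯ (of a_k, of b_k)^{u_k}`, where `(x,y) = x⁻¹y⁻¹xy` and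
`x^u = u⁻¹ x u`. -/
theorem mem_commutator_freeGroup_eq_elementary_word (S : Type*) (w : FreeGroup S)
    (hw : w ∈ commutator (FreeGroup S)) :
    ∃ (k : ℕ) (a b : Fin k → S) (u : Fin k → FreeGroup S),
      w = (List.ofFn (fun i =>
        (u i)⁻¹ * ((FreeGroup.of (a i))⁻¹ * (FreeGroup.of (b i))⁻¹ *
          FreeGroup.of (a i) * FreeGroup.of (b i)) * u i)).prod := by
  obtain ⟨l, hl, rfl⟩ := exists_list_of_mem_closure_of_inv_subset
    (inv_conjCommutators_subset FreeGroup.of)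
    (commutator_le_closure_conjCommutators (FreeGroup.closure_range_of S) hw)
  choose a b u hu using fun i : Fin l.length => hl _ (l.get_mem i)
  have hl_eq : l = List.ofFn fun i => conjCommutator FreeGroup.of (a i) (b i) (u i) :=
    (List.ofFn_get l).symm.trans (congrArg List.ofFn (funext fun i => (hu i).symm))
  exact ⟨l.length, a, b, u, congrArg List.prod hl_eq⟩
end

section
/- Let S be a type and let L be a list of pairs in S × {±1} (signed letters), of length n. Suppose there exists a fixed-point-free involution f on the positions {0, …, n−1} of L such that (i) for every position i, the letter at position f(i) has the same element of S as the letter at position i but the opposite sign, and (ii) the matching is noncrossing: there are no positions i < k < j < l with f(i) = j and f(k) = l. Then the element of the free group F(S) represented by L (the product over the list of of(s)^ε for each letter (s, ε)) equals the identity. -/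
/-!
Induct on intervals `[p, q)` of positions that the matching `f` maps to themselves. Cut such an
interval at the partner `j = f p` of its first position: since the matching is noncrossing,
`(p, j)` and `(j, q)` are again closed under `f`, so by induction both subwords are trivial and
the word reduces to `w p * (w p)⁻¹ = 1`.
-/

open Set

structure IsNoncrossingPairing (f : ℕ → ℕ) (n : ℕ) : Prop where
  lt : ∀ i < n, f i < n
  involutive : ∀ i < n, f (f i) = i
  ne_self : ∀ i < n, f i ≠ i
  noncrossing : ∀ i k, i < k → k < f i → f i < f k → f k < n → False

namespace IsNoncrossingPairing

variable {f : ℕ → ℕ} {n : ℕ}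

theorem mapsTo_inside (hf : IsNoncrossingPairing f n) {p : ℕ} (hp : p < f p) (hpn : f p < n) :
    MapsTo f (Ico (p + 1) (f p)) (Ico (p + 1) (f p)) := by
  rintro i ⟨hpi, hip⟩
  have hin : i < n := by omega
  have hfin := hf.lt i hin
  have hffi := hf.involutive i hin
  have hffp := hf.involutive p (by omega)
  have hne_p : f i ≠ p := fun h => by rw [h] at hffi; omega
  have hne_fp : f i ≠ f p := fun h => by rw [h, hffp] at hffi; omega
  rcases lt_or_gt_of_ne hne_p with hlt | hgt
  · exact (hf.noncrossing (f i) p hlt (by omega) (by omega) hpn).elim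
  · rcases lt_or_gt_of_ne hne_fp with hlt' | hgt'
    · exact ⟨hgt, hlt'⟩
    · exact (hf.noncrossing p i (by omega) hip hgt' hfin).elim

theorem mapsTo_outside (hf : IsNoncrossingPairing f n) {p q : ℕ} (hqn : q ≤ n)
    (hpq : MapsTo f (Ico p q) (Ico p q)) (hp : p < f p) :
    MapsTo f (Ico (f p + 1) q) (Ico (f p + 1) q) := by
  rintro i ⟨hpi, hiq⟩
  obtain ⟨hpfi, hfiq⟩ := hpq ⟨by omega, hiq⟩
  have hin : i < n := by omega
  have hffi := hf.involutive i hin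
  have hffp := hf.involutive p (by omega)
  have hne_p : f i ≠ p := fun h => by rw [h] at hffi; omega
  have hne_fp : f i ≠ f p := fun h => by rw [h, hffp] at hffi; omega
  refine ⟨?_, hfiq⟩
  by_contra hle
  have hfi_inside : f i ∈ Ico (p + 1) (f p) := by constructor <;> omega
  have hinside := hf.mapsTo_inside hp (by omega) hfi_inside
  rw [hffi] at hinside
  exact absurd hinside.2 (by omega)

variable {G : Type*} [Group G] {w : ℕ → G}

theorem prod_Ico_eq_one (hf : IsNoncrossingPairing f n) (hw : ∀ i < n, w (f i) = (w i)⁻¹)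
    {p q : ℕ} (hqn : q ≤ n) (hpq : MapsTo f (Ico p q) (Ico p q)) :
    ((List.Ico p q).map w).prod = 1 := by
  rcases le_or_gt q p with hqp | hpq'
  · simp [List.Ico.eq_nil_of_le hqp]
  obtain ⟨hpfp, hfpq⟩ := hpq ⟨le_rfl, hpq'⟩
  have hp : p < f p := lt_of_le_of_ne hpfp (hf.ne_self p (by omega)).symm
  have hsplit : List.Ico p q = p :: List.Ico (p + 1) (f p) ++ f p :: List.Ico (f p + 1) q := by
    rw [← List.Ico.append_consecutive hpfp hfpq.le, List.Ico.eq_cons hp, List.Ico.eq_cons hfpq,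
      List.cons_append]
  have hinside := hf.prod_Ico_eq_one hw (by omega) (hf.mapsTo_inside hp (by omega))
  have houtside := hf.prod_Ico_eq_one hw hqn (hf.mapsTo_outside hqn hpq hp)
  simp only [hsplit, List.map_cons, List.map_append, List.prod_cons, List.prod_append, hinside,
    houtside, hw p (by omega), mul_one, mul_inv_cancel]
termination_by q - p

theorem prod_range_eq_one (hf : IsNoncrossingPairing f n) (hw : ∀ i < n, w (f i) = (w i)⁻¹) :
    ((List.range n).map w).prod = 1 := by
  rw [← List.Ico.zero_bot]
  exact hf.prod_Ico_eq_one hw le_rfl fun i hi => ⟨Nat.zero_le _, hf.lt i hi.2⟩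

end IsNoncrossingPairing

def Fin.natExtend {n : ℕ} (f : Fin n → Fin n) (i : ℕ) : ℕ :=
  if h : i < n then f ⟨i, h⟩ else i

theorem Fin.natExtend_of_lt {n : ℕ} (f : Fin n → Fin n) {i : ℕ} (h : i < n) :
    Fin.natExtend f i = f ⟨i, h⟩ :=
  dif_pos h

theorem Fin.isNoncrossingPairing_natExtend {n : ℕ} {f : Fin n → Fin n}
    (hinvol : ∀ i, f (f i) = i) (hfree : ∀ i, f i ≠ i)
    (hnc : ¬ ∃ i k j l : Fin n, i < k ∧ k < j ∧ j < l ∧ f i = j ∧ f k = l) :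
    IsNoncrossingPairing (Fin.natExtend f) n where
  lt i hi := by simp [natExtend_of_lt f hi]
  involutive i hi := by rw [natExtend_of_lt f hi, natExtend_of_lt f (f _).isLt, Fin.eta, hinvol]
  ne_self i hi := by simpa [natExtend_of_lt f hi, Fin.ext_iff] using hfree ⟨i, hi⟩
  noncrossing i k hik hki hik' hkn := by
    have hi : i < n := by omega
    have hk : k < n := by omega
    rw [natExtend_of_lt f hi] at hki hik'
    rw [natExtend_of_lt f hk] at hik' hkn
    exact hnc ⟨⟨i, hi⟩, ⟨k, hk⟩, _, _, hik, hki, hik', rfl, rfl⟩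

theorem List.map_getD_range {α : Type*} (l : List α) (d : α) :
    (List.range l.length).map (l.getD · d) = l :=
  List.ext_getElem (by simp) fun i _ h => by simp [List.getElem?_eq_getElem h]

theorem noncrossing_matching_word_eq_one_general (S : Type*) (L : List (S × ℤ))
    (f : Fin L.length → Fin L.length)
    (hinvol : ∀ i, f (f i) = i)
    (hfree : ∀ i, f i ≠ i)
    (hletter : ∀ i, (L.get (f i)).1 = (L.get i).1)
    (hopp : ∀ i, (L.get (f i)).2 = -(L.get i).2)
    (hnc : ¬ ∃ i k j l : Fin L.length, i < k ∧ k < j ∧ j < l ∧ f i = j ∧ f k = l) :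
    (L.map fun p => FreeGroup.of p.1 ^ p.2).prod = 1 := by
  set W := L.map fun p => FreeGroup.of p.1 ^ p.2
  have hW : ∀ i < L.length, W.getD (Fin.natExtend f i) 1 = (W.getD i 1)⁻¹ := by
    intro i hi
    have h₁ := hletter ⟨i, hi⟩
    have h₂ := hopp ⟨i, hi⟩
    simp only [List.get_eq_getElem] at h₁ h₂
    simp [W, Fin.natExtend_of_lt f hi, List.getElem?_eq_getElem hi, h₁, h₂, zpow_neg]
  have hprod :=
    (Fin.isNoncrossingPairing_natExtend hinvol hfree hnc).prod_range_eq_one (w := (W.getD · 1)) hW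
  rwa [← List.length_map (fun p : S × ℤ => FreeGroup.of p.1 ^ p.2), List.map_getD_range]
    at hprod

/-- If a list of signed letters admits a fixed-point-free, sign-reversing,
letter-preserving, noncrossing matching of its positions, then the word it
represents in the free group is the identity. -/
theorem noncrossing_matching_word_eq_one (S : Type*) (L : List (S × ℤ))
    (hsign : ∀ p ∈ L, p.2 = 1 ∨ p.2 = -1)
    (f : Fin L.length → Fin L.length)
    (hinvol : ∀ i, f (f i) = i)
    (hfree : ∀ i, f i ≠ i)
    (hletter : ∀ i, (L.get (f i)).1 = (L.get i).1)
    (hopp : ∀ i, (L.get (f i)).2 = -(L.get i).2)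
    (hnc : ¬ ∃ i k j l : Fin L.length, i < k ∧ k < j ∧ j < l ∧ f i = j ∧ f k = l) :
    (L.map fun p => FreeGroup.of p.1 ^ p.2).prod = 1 :=
  noncrossing_matching_word_eq_one_general S L f hinvol hfree hletter hopp hnc
end

section
/- Let S be a type and let L be a list of pairs in S × {±1} (signed letters), of length n. If the element of the free group F(S) represented by L (the product over the list of of(s)^ε for each letter (s, ε)) equals the identity, then there exists a fixed-point-free involution f on the positions {0, …, n−1} of L such that (i) for every position i, the letter at position f(i) has the same element of S as the letter at position i but the opposite sign, and (ii) the matching is noncrossing: there are no positions i < k < j < l with f(i) = j and f(k) = l. -/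
/-!
A nonempty word representing `1` in the free group is not reduced, so it contains an adjacent
cancelling pair `x ^ ε, x ^ (-ε)`. Deleting that pair leaves a shorter word representing `1`,
which by induction carries a noncrossing matching. Matching the two deleted letters with each
other extends it to the original word, and no crossing can appear because no position lies
strictly between two adjacent ones.
-/

open FreeGroup

structure IsNoncrossingMatching {α : Type*} (R : α → α → Prop) {n : ℕ} (w : Fin n → α)
    (f : Fin n → Fin n) : Prop where
  involutive : ∀ i, f (f i) = i
  ne_self : ∀ i, f i ≠ i
  rel : ∀ i, R (w i) (w (f i))
  noncrossing : ¬ ∃ i k j l, i < k ∧ k < j ∧ j < l ∧ f i = j ∧ f k = l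

theorem isNoncrossingMatching_fin_zero {α : Type*} (R : α → α → Prop) (w : Fin 0 → α) :
    IsNoncrossingMatching R w id where
  involutive i := i.elim0
  ne_self i := i.elim0
  rel i := i.elim0
  noncrossing := fun ⟨i, _⟩ => i.elim0

section ExtendMatching

variable {m n : ℕ} (e : Fin n ↪o Fin m) (q₁ q₂ : Fin m) (f : Fin n → Fin n)

/-- The default of `Function.extend` only matters at `q₁` and `q₂`: elsewhere it is junk. -/
noncomputable def extendMatching : Fin m → Fin m :=
  Function.extend e (e ∘ f) fun i => if i = q₁ then q₂ else q₁

theorem extendMatching_apply_emb (j : Fin n) : extendMatching e q₁ q₂ f (e j) = e (f j) :=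
  e.injective.extend_apply _ _ j

variable {e q₁ q₂}

theorem extendMatching_apply_left (h₁ : q₁ ∉ Set.range e) : extendMatching e q₁ q₂ f q₁ = q₂ := by
  rw [extendMatching, Function.extend_apply' _ _ _ h₁, if_pos rfl]

theorem extendMatching_apply_right (h₂ : q₂ ∉ Set.range e) (hne : q₂ ≠ q₁) :
    extendMatching e q₁ q₂ f q₂ = q₁ := by
  rw [extendMatching, Function.extend_apply' _ _ _ h₂, if_neg hne]

variable {f} {α : Type*} {R : α → α → Prop} {w : Fin m → α}

theorem IsNoncrossingMatching.extend (hcover : ∀ i, i ∉ Set.range e ↔ i = q₁ ∨ i = q₂)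
    (hq : (q₂ : ℕ) = q₁ + 1) (hf : IsNoncrossingMatching R (w ∘ e) f)
    (h₁₂ : R (w q₁) (w q₂)) (h₂₁ : R (w q₂) (w q₁)) :
    IsNoncrossingMatching R w (extendMatching e q₁ q₂ f) := by
  have hne : q₂ ≠ q₁ := fun h => by simp [h] at hq
  have hq₁ := extendMatching_apply_left (q₂ := q₂) f ((hcover q₁).2 (.inl rfl))
  have hq₂ := extendMatching_apply_right f ((hcover q₂).2 (.inr rfl)) hne
  have hcases : ∀ i, i = q₁ ∨ i = q₂ ∨ ∃ j, e j = i := fun i => by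
    by_cases hi : i ∈ Set.range e
    · exact .inr (.inr hi)
    · exact ((hcover i).1 hi).imp_right .inl
  set g := extendMatching e q₁ q₂ f
  have hge : ∀ j, g (e j) = e (f j) := extendMatching_apply_emb e q₁ q₂ f
  refine ⟨fun i => ?_, fun i => ?_, fun i => ?_, ?_⟩
  · rcases hcases i with rfl | rfl | ⟨j, rfl⟩
    · rw [hq₁, hq₂]
    · rw [hq₂, hq₁]
    · rw [hge, hge, hf.involutive]
  · rcases hcases i with rfl | rfl | ⟨j, rfl⟩
    · rwa [hq₁]
    · rw [hq₂]; exact hne.symm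
    · rw [hge]; exact e.injective.ne (hf.ne_self j)
  · rcases hcases i with rfl | rfl | ⟨j, rfl⟩
    · rwa [hq₁]
    · rwa [hq₂]
    · rw [hge]; exact hf.rel j
  · rintro ⟨i, k, j, l, hik, hkj, hjl, rfl, rfl⟩
    rw [Fin.lt_def] at hik hkj hjl
    rcases hcases i with rfl | rfl | ⟨a, rfl⟩
    · rw [hq₁] at hkj; omega
    · rw [hq₂] at hkj; omega
    rcases hcases k with rfl | rfl | ⟨b, rfl⟩
    · rw [hq₁] at hjl; omega
    · rw [hq₂] at hjl; omega
    · rw [hge, hge, ← Fin.lt_def, e.lt_iff_lt] at *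
      exact hf.noncrossing ⟨a, b, f a, f b, hik, hkj, hjl, rfl, rfl⟩

end ExtendMatching

namespace List

section SkipPair

variable {α : Type*} (A B : List α) (a b : α)

def skipPairEmbedding : Fin (A ++ B).length ↪o Fin (A ++ a :: b :: B).length :=
  OrderEmbedding.ofStrictMono
    (fun j => ⟨if (j : ℕ) < A.length then j else j + 2, by
      have := j.isLt; simp only [length_append, length_cons] at *; split <;> omega⟩)
    (fun i j h => by rw [Fin.lt_def] at *; dsimp only; split_ifs <;> omega)

theorem val_skipPairEmbedding (j : Fin (A ++ B).length) :
    (skipPairEmbedding A B a b j : ℕ) = if (j : ℕ) < A.length then (j : ℕ) else j + 2 := rfl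

theorem get_skipPairEmbedding (j : Fin (A ++ B).length) :
    (A ++ a :: b :: B).get (skipPairEmbedding A B a b j) = (A ++ B).get j := by
  have := j.isLt
  simp only [get_eq_getElem, val_skipPairEmbedding]
  split_ifs with h
  · simp [getElem_append_left, h]
  · rw [getElem_append_right (by omega), getElem_append_right (by omega)]
    simp only [show (j : ℕ) + 2 - A.length = (j - A.length) + 2 by omega, getElem_cons_succ]

theorem not_mem_range_skipPairEmbedding_iff (i : Fin (A ++ a :: b :: B).length) :
    i ∉ Set.range (skipPairEmbedding A B a b) ↔
      (i : ℕ) = A.length ∨ (i : ℕ) = A.length + 1 := by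
  have := i.isLt
  simp only [length_append, length_cons] at this
  constructor
  · intro h
    by_contra! hi
    rcases lt_or_ge (i : ℕ) A.length with hlt | hge
    · exact h ⟨⟨i, by simp; omega⟩, Fin.ext (by simp [val_skipPairEmbedding, hlt])⟩
    · exact h ⟨⟨i - 2, by simp; omega⟩,
        Fin.ext (by rw [val_skipPairEmbedding]; split_ifs <;> dsimp only at * <;> omega)⟩
  · rintro hi ⟨j, rfl⟩
    rw [val_skipPairEmbedding] at hi
    split_ifs at hi <;> omega

variable {A B a b} {R : α → α → Prop}

theorem exists_isNoncrossingMatching_append_cons_cons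
    (h : ∃ f, IsNoncrossingMatching R (A ++ B).get f) (hab : R a b) (hba : R b a) :
    ∃ f, IsNoncrossingMatching R (A ++ a :: b :: B).get f := by
  obtain ⟨f, hf⟩ := h
  have hlen : A.length + 1 < (A ++ a :: b :: B).length := by simp
  have hf' : IsNoncrossingMatching R ((A ++ a :: b :: B).get ∘ skipPairEmbedding A B a b) f := by
    convert hf using 1
    exact funext (get_skipPairEmbedding A B a b)
  refine ⟨_, hf'.extend (q₁ := ⟨A.length, by omega⟩) (q₂ := ⟨A.length + 1, hlen⟩)
    (fun i => ?_) rfl ?_ ?_⟩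
  · simp only [not_mem_range_skipPairEmbedding_iff, Fin.ext_iff]
  · simpa [getElem_append_right] using hab
  · simpa [getElem_append_right] using hba

end SkipPair

end List

theorem FreeGroup.exists_eq_append_cons_cons_of_mk_eq_one {α : Type*} [DecidableEq α]
    {L : List (α × Bool)} (hone : mk L = 1) (hL : L ≠ []) :
    ∃ A x b B, L = A ++ (x, b) :: (x, !b) :: B := by
  have hnred : ¬ IsReduced L := fun h => hL <| by
    rw [← h.reduce_eq, ← toWord_mk, hone, toWord_one]
  rw [isReduced_iff_not_step] at hnred
  push Not at hnred
  obtain ⟨_, @⟨A, B, x, b⟩⟩ := hnred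
  exact ⟨A, x, b, B, rfl⟩

section SignedLetters

variable {S : Type*}

def IsInverseLetter (p q : S × ℤ) : Prop := q.1 = p.1 ∧ q.2 = -p.2

theorem IsInverseLetter.symm {p q : S × ℤ} (h : IsInverseLetter p q) : IsInverseLetter q p :=
  ⟨h.1.symm, by rw [h.2, neg_neg]⟩

def boolLetter (p : S × ℤ) : S × Bool := (p.1, decide (p.2 = 1))

theorem of_zpow_eq_mk_boolLetter {p : S × ℤ} (hp : p.2 = 1 ∨ p.2 = -1) :
    of p.1 ^ p.2 = mk [boolLetter p] := by
  rcases hp with h | h <;> simp [boolLetter, h, of, inv_mk, invRev]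

theorem prod_map_of_zpow_eq_mk {L : List (S × ℤ)} (hsign : ∀ p ∈ L, p.2 = 1 ∨ p.2 = -1) :
    (L.map fun p => of p.1 ^ p.2).prod = mk (L.map boolLetter) := by
  induction L with
  | nil => rfl
  | cons p L ih =>
    rw [List.map_cons, List.prod_cons, of_zpow_eq_mk_boolLetter (hsign p (.head L)),
      ih fun q hq => hsign q (.tail p hq), mul_mk]
    rfl

theorem exists_eq_append_inverseLetter_of_prod_eq_one {L : List (S × ℤ)}
    (hsign : ∀ p ∈ L, p.2 = 1 ∨ p.2 = -1) (hone : (L.map fun p => of p.1 ^ p.2).prod = 1)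
    (hL : L ≠ []) : ∃ A a b B, L = A ++ a :: b :: B ∧ IsInverseLetter a b := by
  classical
  rw [prod_map_of_zpow_eq_mk hsign] at hone
  obtain ⟨A', x, β, B', hL'⟩ :=
    FreeGroup.exists_eq_append_cons_cons_of_mk_eq_one hone (by simpa using hL)
  obtain ⟨A, C, rfl, -, hC⟩ := List.map_eq_append_iff.1 hL'
  obtain ⟨a, C, rfl, ha, hC⟩ := List.map_eq_cons_iff.1 hC
  obtain ⟨b, B, rfl, hb, -⟩ := List.map_eq_cons_iff.1 hC
  refine ⟨A, a, b, B, rfl, ?_⟩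
  simp only [boolLetter, Prod.mk.injEq] at ha hb
  refine ⟨hb.1.trans ha.1.symm, ?_⟩
  rw [← ha.2] at hb
  rcases hsign a (by simp) with h | h <;> rcases hsign b (by simp) with h' | h' <;>
    simp [h, h'] at hb ⊢

theorem prod_append_cons_cons_of_isInverseLetter {A B : List (S × ℤ)} {a b : S × ℤ}
    (hab : IsInverseLetter a b) :
    ((A ++ a :: b :: B).map fun p => of p.1 ^ p.2).prod =
      ((A ++ B).map fun p => of p.1 ^ p.2).prod := by
  obtain ⟨x, ε⟩ := a
  obtain ⟨y, δ⟩ := b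
  obtain ⟨rfl : y = x, rfl : δ = -ε⟩ := hab
  simp [zpow_neg]

theorem exists_isNoncrossingMatching_of_prod_eq_one (L : List (S × ℤ))
    (hsign : ∀ p ∈ L, p.2 = 1 ∨ p.2 = -1) (hone : (L.map fun p => of p.1 ^ p.2).prod = 1) :
    ∃ f, IsNoncrossingMatching IsInverseLetter L.get f := by
  rcases eq_or_ne L [] with rfl | hL
  · exact ⟨id, isNoncrossingMatching_fin_zero _ _⟩
  obtain ⟨A, a, b, B, rfl, hab⟩ := exists_eq_append_inverseLetter_of_prod_eq_one hsign hone hL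
  refine List.exists_isNoncrossingMatching_append_cons_cons ?_ hab hab.symm
  refine exists_isNoncrossingMatching_of_prod_eq_one (A ++ B) (fun p hp => hsign p ?_) ?_
  · simp only [List.mem_append, List.mem_cons] at hp ⊢; tauto
  · rwa [← prod_append_cons_cons_of_isInverseLetter hab]
termination_by L.length
decreasing_by subst_vars; simp

end SignedLetters

/-- If a list of signed letters represents the identity of the free group, then it
admits a fixed-point-free, sign-reversing, letter-preserving, noncrossing matching
of its positions. -/
theorem word_eq_one_exists_noncrossing_matching (S : Type*) (L : List (S × ℤ))
    (hsign : ∀ p ∈ L, p.2 = 1 ∨ p.2 = -1)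
    (hone : (L.map fun p => FreeGroup.of p.1 ^ p.2).prod = 1) :
    ∃ f : Fin L.length → Fin L.length,
      (∀ i, f (f i) = i) ∧
      (∀ i, f i ≠ i) ∧
      (∀ i, (L.get (f i)).1 = (L.get i).1) ∧
      (∀ i, (L.get (f i)).2 = -(L.get i).2) ∧
      ¬ ∃ i k j l : Fin L.length, i < k ∧ k < j ∧ j < l ∧ f i = j ∧ f k = l := by
  obtain ⟨f, hf⟩ := exists_isNoncrossingMatching_of_prod_eq_one L hsign hone
  exact ⟨f, hf.involutive, hf.ne_self, fun i => (hf.rel i).1, fun i => (hf.rel i).2,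
    hf.noncrossing⟩
end
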